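/- Relaxed top-k efficiency of top-k Shapley values: let N be a finite nonempty set and f : 2^N → ℝ a monotone submodular characteristic function with f(∅) = 0, and let φ be the top-k Shapley values of the game (N, f). Then for every 0 ≤ k ≤ |N|, (1 - 1/e) · max_{S ⊆ N, |S| = k} f(S) ≤ ∑_{i=|N|-k+1}^{|N|} φ_{(i)}, where φ_{(1)} ≤ ⋯ ≤ φ_{(|N|)} is the order statistic of φ; i.e. the sum of the k largest top-k Shapley values is at least (1 - 1/e) times the maximal value of any coalition of size k. -/

import Mathlib

open Finset

/-- The set of the first `k` players chosen by the ordering `σ`. -/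
def prefixSet {N : Type*} [Fintype N] [DecidableEq N]
    (σ : Fin (Fintype.card N) ≃ N) (k : ℕ) : Finset N :=
  (Finset.univ.filter (fun j : Fin (Fintype.card N) => (j : ℕ) < k)).image σ

/-- `(σ, φ)` is top-k Shapley data for `f`: `σ` orders the players so that each successive
player maximizes the marginal gain of `f` over the set of previously chosen players, and
`φ` assigns to each chosen player exactly that marginal gain (ties resolved arbitrarily). -/
def IsTopkShapley {N : Type*} [Fintype N] [DecidableEq N]
    (f : Finset N → ℝ) (σ : Fin (Fintype.card N) ≃ N) (φ : N → ℝ) : Prop :=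
  ∀ k : Fin (Fintype.card N),
    (∀ i : N, i ∉ prefixSet σ (k : ℕ) →
      f (insert i (prefixSet σ (k : ℕ))) ≤ f (insert (σ k) (prefixSet σ (k : ℕ)))) ∧
    φ (σ k) = f (insert (σ k) (prefixSet σ (k : ℕ))) - f (prefixSet σ (k : ℕ))

/-- A set function is submodular if for every `X` and distinct `x₁, x₂ ∉ X`,
`f (X ∪ {x₁}) + f (X ∪ {x₂}) ≥ f (X ∪ {x₁, x₂}) + f X`. -/
def Submodular {N : Type*} [DecidableEq N] (f : Finset N → ℝ) : Prop :=
  ∀ X : Finset N, ∀ x₁ x₂ : N, x₁ ∉ X → x₂ ∉ X → x₁ ≠ x₂ →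
    f (insert x₁ (insert x₂ X)) + f X ≤ f (insert x₁ X) + f (insert x₂ X)

/-- Sum of the `k` largest values of `φ` over a finite type: sort the multiset of values in
increasing order and sum the first `k` entries of the reversed (decreasing) list. -/
noncomputable def sumTopK {N : Type*} [Fintype N] (φ : N → ℝ) (k : ℕ) : ℝ :=
  ((((Finset.univ.val.map φ).sort (· ≤ ·)).reverse.take k)).sum

/-! The greedy marginals are nonincreasing (a later player gains less over a longer prefix by
submodularity, and no more than the earlier player by greediness), so the `k` largest top-k
Shapley values belong to the first `k` greedy players and telescope to `f (prefixSet σ k)`.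
For a coalition `S` of size `k`, monotonicity and submodularity bound the gap to `f S` by `k`
times the next greedy gain, so the gap shrinks by a factor `1 - 1/k` per step, hence by
`(1 - 1/k) ^ k ≤ 1/e` after `k` steps. -/

namespace Submodular

variable {N : Type*} [DecidableEq N] {f : Finset N → ℝ}

theorem marginal_union_le (hsub : Submodular f) {X : Finset N} {a : N} (ha : a ∉ X)
    (D : Finset N) (haD : a ∉ D) :
    f (insert a (X ∪ D)) - f (X ∪ D) ≤ f (insert a X) - f X := by
  induction D using Finset.induction_on with
  | empty => simp
  | @insert d D hdD ih =>
    rw [mem_insert, not_or] at haD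
    have ih := ih haD.2
    rw [union_insert]
    by_cases hd : d ∈ X ∪ D
    · rwa [insert_eq_of_mem hd]
    · have := hsub (X ∪ D) a d (by simp [ha, haD.2]) hd haD.1
      linarith

theorem marginal_le_of_subset (hsub : Submodular f) {X Y : Finset N} {a : N} (hXY : X ⊆ Y)
    (ha : a ∉ Y) : f (insert a Y) - f Y ≤ f (insert a X) - f X := by
  simpa [union_sdiff_of_subset hXY] using
    hsub.marginal_union_le (fun h ↦ ha (hXY h)) (Y \ X) (fun h ↦ ha (mem_sdiff.1 h).1)

theorem sub_le_sum_marginal (hsub : Submodular f) (X A : Finset N) :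
    f (A ∪ X) - f X ≤ ∑ i ∈ A \ X, (f (insert i X) - f X) := by
  induction A using Finset.induction_on with
  | empty => simp
  | @insert a A haA ih =>
    by_cases haX : a ∈ X
    · rwa [insert_union, insert_eq_of_mem (mem_union_right A haX), insert_sdiff_of_mem A haX]
    · rw [insert_sdiff_of_notMem A haX, sum_insert fun h ↦ haA (mem_sdiff.1 h).1, insert_union]
      have := hsub.marginal_le_of_subset (Y := A ∪ X) (a := a) subset_union_right
        (by simp [haA, haX])
      linarith

end Submodular

section prefixSet

variable {N : Type*} [Fintype N] [DecidableEq N] (σ : Fin (Fintype.card N) ≃ N)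

theorem mem_prefixSet {i : N} {m : ℕ} : i ∈ prefixSet σ m ↔ (σ.symm i : ℕ) < m := by
  simp only [prefixSet, mem_image, mem_filter, mem_univ, true_and]
  exact ⟨by rintro ⟨j, hj, rfl⟩; simpa using hj, fun h ↦ ⟨σ.symm i, h, by simp⟩⟩

@[simp]
theorem prefixSet_zero : prefixSet σ 0 = ∅ := by
  ext i; simp [mem_prefixSet]

theorem prefixSet_mono {m m' : ℕ} (h : m ≤ m') : prefixSet σ m ⊆ prefixSet σ m' := by
  intro i hi; rw [mem_prefixSet] at *; omega

theorem apply_notMem_prefixSet (j : Fin (Fintype.card N)) : σ j ∉ prefixSet σ j := by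
  simp [mem_prefixSet]

theorem prefixSet_succ (j : Fin (Fintype.card N)) :
    prefixSet σ (j + 1) = insert (σ j) (prefixSet σ j) := by
  ext i
  rw [mem_prefixSet, mem_insert, mem_prefixSet, Nat.lt_succ_iff_lt_or_eq, Fin.val_inj,
    σ.symm_apply_eq, or_comm]

end prefixSet

theorem sumTopK_eq_sum_of_antitone {N : Type*} [Fintype N] {φ : N → ℝ}
    {σ : Fin (Fintype.card N) ≃ N} (hanti : Antitone (φ ∘ σ)) (k : ℕ) :
    sumTopK φ k = ∑ j : Fin (Fintype.card N) with j.val < k, φ (σ j) := by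
  have hmap : univ.val.map φ = ↑(List.ofFn (φ ∘ σ)).reverse := by
    rw [Multiset.coe_reverse, ← Fin.univ_val_map, ← Multiset.map_map, ← map_univ_equiv σ]
    rfl
  have hsort : (univ.val.map φ).sort (· ≤ ·) = (List.ofFn (φ ∘ σ)).reverse := by
    rw [hmap, Multiset.coe_sort]
    exact List.mergeSort_eq_self _ hanti.sortedGE_ofFn.reverse.pairwise
  rw [sumTopK, hsort, List.reverse_reverse, List.sum_take_ofFn]
  rfl

namespace IsTopkShapley

variable {N : Type*} [Fintype N] [DecidableEq N] {f : Finset N → ℝ}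
  {σ : Fin (Fintype.card N) ≃ N} {φ : N → ℝ}

theorem apply_eq_sub (hσφ : IsTopkShapley f σ φ) (j : Fin (Fintype.card N)) :
    φ (σ j) = f (prefixSet σ (j + 1)) - f (prefixSet σ j) := by
  rw [(hσφ j).2, prefixSet_succ]

theorem le_prefixSet_succ (hσφ : IsTopkShapley f σ φ) {m : ℕ} (hm : m < Fintype.card N)
    {i : N} (hi : i ∉ prefixSet σ m) : f (insert i (prefixSet σ m)) ≤ f (prefixSet σ (m + 1)) := by
  rw [prefixSet_succ σ ⟨m, hm⟩]
  exact (hσφ ⟨m, hm⟩).1 i hi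

theorem antitone (hσφ : IsTopkShapley f σ φ) (hsub : Submodular f) : Antitone (φ ∘ σ) := by
  intro i j hij
  have hj : σ j ∉ prefixSet σ i := by simpa [mem_prefixSet] using hij
  have hdim := hsub.marginal_le_of_subset (prefixSet_mono σ (Fin.val_le_of_le hij))
    (apply_notMem_prefixSet σ j)
  have hgreedy := (hσφ i).1 (σ j) hj
  simp only [Function.comp_apply, (hσφ i).2, (hσφ j).2]
  linarith

theorem sumTopK_eq (hσφ : IsTopkShapley f σ φ) (hf : f ∅ = 0) (hsub : Submodular f) {k : ℕ}
    (hk : k ≤ Fintype.card N) : sumTopK φ k = f (prefixSet σ k) := by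
  set g : ℕ → ℝ := fun m ↦ f (prefixSet σ (m + 1)) - f (prefixSet σ m)
  rw [sumTopK_eq_sum_of_antitone (hσφ.antitone hsub), sum_filter]
  simp_rw [hσφ.apply_eq_sub]
  have hrange : {m ∈ range (Fintype.card N) | m < k} = range k := by
    ext; simp only [mem_filter, mem_range]; omega
  rw [Fin.sum_univ_eq_sum_range (fun j ↦ if j < k then g j else 0), ← sum_filter, hrange,
    sum_range_sub (fun m ↦ f (prefixSet σ m)), prefixSet_zero, hf, sub_zero]

theorem sub_le_card_mul (hσφ : IsTopkShapley f σ φ)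
    (hmono : ∀ S T : Finset N, S ⊆ T → f S ≤ f T) (hsub : Submodular f) (S : Finset N)
    {m : ℕ} (hm : m < Fintype.card N) :
    f S - f (prefixSet σ m) ≤ #S * (f (prefixSet σ (m + 1)) - f (prefixSet σ m)) := by
  set P := prefixSet σ m
  have hgain : 0 ≤ f (prefixSet σ (m + 1)) - f P :=
    sub_nonneg.2 (hmono _ _ (prefixSet_mono σ m.le_succ))
  calc f S - f P ≤ f (S ∪ P) - f P := by gcongr; exact hmono _ _ subset_union_left
    _ ≤ ∑ i ∈ S \ P, (f (insert i P) - f P) := hsub.sub_le_sum_marginal P S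
    _ ≤ ∑ i ∈ S \ P, (f (prefixSet σ (m + 1)) - f P) :=
        sum_le_sum fun i hi ↦ by gcongr; exact hσφ.le_prefixSet_succ hm (mem_sdiff.1 hi).2
    _ = #(S \ P) * (f (prefixSet σ (m + 1)) - f P) := by rw [sum_const, nsmul_eq_mul]
    _ ≤ #S * (f (prefixSet σ (m + 1)) - f P) := by
        gcongr; exact sdiff_subset

end IsTopkShapley

theorem le_exp_neg_one_mul_of_le_mul_sub {k : ℕ} (hk : 0 < k) {d : ℕ → ℝ} (hd₀ : 0 ≤ d 0)
    (hd : ∀ m < k, d m ≤ k * (d m - d (m + 1))) : d k ≤ Real.exp (-1) * d 0 := by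
  have hk' : (1 : ℝ) ≤ k := by exact_mod_cast hk
  have hq : 0 ≤ 1 - 1 / (k : ℝ) := sub_nonneg.2 (div_le_one_of_le₀ hk' (by positivity))
  have hgeom : ∀ m ≤ k, d m ≤ (1 - 1 / (k : ℝ)) ^ m * d 0 := by
    intro m hm
    induction m with
    | zero => simp
    | succ m ih =>
      have hstep : d (m + 1) ≤ (1 - 1 / (k : ℝ)) * d m := by
        rw [show (1 - 1 / (k : ℝ)) * d m = d m - d m / k by ring, le_sub_comm,
          div_le_iff₀ (by positivity)]
        linarith [hd m hm]
      calc d (m + 1) ≤ (1 - 1 / (k : ℝ)) * d m := hstep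
        _ ≤ (1 - 1 / (k : ℝ)) * ((1 - 1 / (k : ℝ)) ^ m * d 0) := by gcongr; exact ih (by omega)
        _ = (1 - 1 / (k : ℝ)) ^ (m + 1) * d 0 := by ring
  calc d k ≤ (1 - 1 / (k : ℝ)) ^ k * d 0 := hgeom k le_rfl
    _ ≤ Real.exp (-1) * d 0 := by gcongr; exact Real.one_sub_div_pow_le_exp_neg hk'

theorem topkShapley_relaxed_topk_efficiency_general
    {N : Type*} [Fintype N] [DecidableEq N]
    (f : Finset N → ℝ) (hf : f ∅ = 0)
    (hmono : ∀ S T : Finset N, S ⊆ T → f S ≤ f T) (hsub : Submodular f)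
    (σ : Fin (Fintype.card N) ≃ N) (φ : N → ℝ) (hσφ : IsTopkShapley f σ φ) :
    ∀ k ≤ Fintype.card N, ∀ S : Finset N, S.card = k →
      (1 - 1 / Real.exp 1) * f S ≤ sumTopK φ k := by
  intro k hk S hS
  obtain rfl | hk₀ := k.eq_zero_or_pos
  · simp [card_eq_zero.1 hS, hf, sumTopK]
  have hgap := le_exp_neg_one_mul_of_le_mul_sub hk₀ (d := fun m ↦ f S - f (prefixSet σ m))
    (by simpa [hf] using hmono _ _ (empty_subset S))
    fun m hm ↦ by
      have := hσφ.sub_le_card_mul hmono hsub S (hm.trans_le hk)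
      rw [hS] at this
      linarith
  simp only [prefixSet_zero, hf, sub_zero] at hgap
  rw [hσφ.sumTopK_eq hf hsub hk, one_div, ← Real.exp_neg]
  linarith

/-- **Relaxed top-k efficiency of top-k Shapley values.** If `f` is monotone and submodular
with `f ∅ = 0` and `φ` are the top-k Shapley values of `(N, f)`, then for every
`0 ≤ k ≤ |N|` and every coalition `S` of size `k`,
`(1 - 1/e) * f S ≤` the sum of the `k` largest values of `φ`. -/
theorem topkShapley_relaxed_topk_efficiency
    {N : Type*} [Fintype N] [Nonempty N] [DecidableEq N]
    (f : Finset N → ℝ) (hf : f ∅ = 0)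
    (hmono : ∀ S T : Finset N, S ⊆ T → f S ≤ f T) (hsub : Submodular f)
    (σ : Fin (Fintype.card N) ≃ N) (φ : N → ℝ) (hσφ : IsTopkShapley f σ φ) :
    ∀ k ≤ Fintype.card N, ∀ S : Finset N, S.card = k →
      (1 - 1 / Real.exp 1) * f S ≤ sumTopK φ k :=
  topkShapley_relaxed_topk_efficiency_general f hf hmono hsub σ φ hσφ
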